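/- For every natural number n ≥ 1, ∑_{j=1}^{n} H_{n+1−j}/j = ∑_{j=1}^{n−1} H_{n−j}/j + 2H_n/(n+1), where H_k is the k-th harmonic number with H_0 = 0 (an empty sum is 0). -/

import Mathlib

open Finset

noncomputable def H (n : ℕ) : ℝ := ∑ i ∈ Finset.Icc 1 n, (1:ℝ)/i
noncomputable def H2 (n : ℕ) : ℝ := ∑ i ∈ Finset.Icc 1 n, (1:ℝ)/(i:ℝ)^2

/-
H_{n+1-j} = H_{n-j} + 1/(n+1-j), and the partial fraction decomposition
1/(j(n+1-j)) = (1/j + 1/(n+1-j))/(n+1) turns the extra terms into (H_n + H_n)/(n+1),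
the second copy of H_n coming from the reflection j ↦ n+1-j of {1, …, n}.
-/

lemma H_zero : H 0 = 0 := by
  simp [H]

lemma H_succ (k : ℕ) : H (k + 1) = H k + 1 / ((k : ℝ) + 1) := by
  rw [H, sum_Icc_succ_top (by omega), ← H]
  push_cast
  rfl

lemma sum_Icc_one_reflect {M : Type*} [AddCommMonoid M] (f : ℕ → M) (n : ℕ) :
    ∑ j ∈ Icc 1 n, f (n + 1 - j) = ∑ j ∈ Icc 1 n, f j :=
  sum_nbij' (fun j => n + 1 - j) (fun j => n + 1 - j)
    (fun j hj => by simp only [mem_Icc] at hj ⊢; omega)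
    (fun j hj => by simp only [mem_Icc] at hj ⊢; omega)
    (fun j hj => by simp only [mem_Icc] at hj; omega)
    (fun j hj => by simp only [mem_Icc] at hj; omega)
    (fun _ _ => rfl)

lemma sum_Icc_one_div_reflect (n : ℕ) :
    ∑ j ∈ Icc 1 n, 1 / ((n : ℝ) + 1 - j) = H n := by
  rw [H, ← sum_Icc_one_reflect (fun j : ℕ => (1 : ℝ) / j)]
  refine sum_congr rfl fun j hj => ?_
  rw [Nat.cast_sub (by simp only [mem_Icc] at hj; omega)]
  push_cast
  rfl

lemma H_sub_succ_div (n j : ℕ) (hj : j ∈ Icc 1 n) :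
    H (n + 1 - j) / j = H (n - j) / j + (1 / j + 1 / ((n : ℝ) + 1 - j)) / ((n : ℝ) + 1) := by
  simp only [mem_Icc] at hj
  have hj0 : (0 : ℝ) < j := by exact_mod_cast hj.1
  have hjn : (j : ℝ) ≤ n := by exact_mod_cast hj.2
  rw [show n + 1 - j = n - j + 1 by omega, H_succ, Nat.cast_sub hj.2]
  have : (n : ℝ) - j + 1 ≠ 0 := by linarith
  have : (n : ℝ) + 1 - j ≠ 0 := by linarith
  field_simp
  ring

lemma sum_Icc_H_sub_div (n : ℕ) :
    ∑ j ∈ Icc 1 n, H (n - j) / j = ∑ j ∈ Icc 1 (n - 1), H (n - j) / j := by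
  refine (sum_subset (Icc_subset_Icc_right (Nat.sub_le n 1)) fun j hj hj' => ?_).symm
  simp only [mem_Icc] at hj hj'
  rw [show n - j = 0 by omega, H_zero, zero_div]

theorem stmt19_general (n : ℕ) :
    ∑ j ∈ Icc 1 n, H (n+1-j)/(j:ℝ)
      = (∑ j ∈ Icc 1 (n-1), H (n-j)/(j:ℝ)) + 2*H n/((n:ℝ)+1) := by
  rw [sum_congr rfl (H_sub_succ_div n), sum_add_distrib, sum_Icc_H_sub_div, ← sum_div,
    sum_add_distrib, sum_Icc_one_div_reflect, two_mul]
  rfl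

theorem stmt19 (n : ℕ) (hn : 1 ≤ n) :
    ∑ j ∈ Icc 1 n, H (n+1-j)/(j:ℝ)
      = (∑ j ∈ Icc 1 (n-1), H (n-j)/(j:ℝ)) + 2*H n/((n:ℝ)+1) :=
  stmt19_general n
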